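/- arXiv:math/0104016 — 5 statements merged into one kernel-verified Lean document; each statement's English description precedes it below -/
import Mathlib

section
/- Let C be a k-dimensional binary linear code of length n and θ any real number. Then (1/2^k) · Σ_{a ∈ C^⊥} ( Σ_{c ∈ C} (sin θ)^{n − wt(c+a)} (cos θ)^{wt(c+a)} )² ≤ 1, where C^⊥ is the dual code, wt is Hamming weight, and c + a is computed over GF(2). -/
open scoped Classical

/-- The dual code of a binary linear code `C ⊆ GF(2)^n`. -/
def dualCode {n : ℕ} (C : Submodule (ZMod 2) (Fin n → ZMod 2)) :
    Submodule (ZMod 2) (Fin n → ZMod 2) where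
  carrier := {a | ∀ c ∈ C, ∑ i, a i * c i = 0}
  add_mem' := by
    intro a b ha hb c hc
    simp only [Set.mem_setOf_eq] at *
    simp [add_mul, Finset.sum_add_distrib, ha c hc, hb c hc]
  zero_mem' := by simp
  smul_mem' := by
    intro r a ha c hc
    simp only [Set.mem_setOf_eq] at *
    simp [smul_eq_mul, mul_assoc, ← Finset.mul_sum, ha c hc]

/-- The finset of codewords of a binary linear code. -/
noncomputable def codewords {n : ℕ} (C : Submodule (ZMod 2) (Fin n → ZMod 2)) :
    Finset (Fin n → ZMod 2) :=
  Finset.univ.filter (fun c => c ∈ C)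

/-- `A w`: the number of codewords of Hamming weight `w`. -/
noncomputable def weightDist {n : ℕ} (C : Submodule (ZMod 2) (Fin n → ZMod 2)) (w : ℕ) : ℕ :=
  (Finset.univ.filter (fun c => c ∈ C ∧ hammingNorm c = w)).card


/-!
Induction on the length, with `sin θ, cos θ` generalised to arbitrary per-coordinate weights
`w i 0, w i 1` and the bound `|C| * ∏ i, (w i 0 ^ 2 + w i 1 ^ 2)`. If every codeword vanishes at the
first coordinate, the dual code is free there and the sum factors. Otherwise a codeword `g` with
`g 0 = 1` splits `C` into the shortened code `S` and its translate by `g`; a dual codeword is then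
determined by its tail, which ranges over `S^⊥`, and its coset sum is `x * A + y * B` with
`{x, y} = {w 0 0, w 0 1}`, where `A` and `B` are coset sums of `S` for the tail weights and for the
tail weights shifted by `g`. Cauchy–Schwarz `(x A + y B)² ≤ (x² + y²)(A² + B²)`, the induction
hypothesis for both weight systems and `|C| = 2 |S|` close the step.
-/

open Finset

namespace BinaryCode

variable {n : ℕ} {M : Type*} [AddCommMonoid M]

lemma mem_codewords {C : Submodule (ZMod 2) (Fin n → ZMod 2)} {c : Fin n → ZMod 2} :
    c ∈ codewords C ↔ c ∈ C := by
  simp [codewords]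

lemma card_codewords (C : Submodule (ZMod 2) (Fin n → ZMod 2)) :
    #(codewords C) = 2 ^ Module.finrank (ZMod 2) C := by
  rw [codewords, ← Fintype.card_subtype, Module.card_eq_pow_finrank (K := ZMod 2), ZMod.card]

lemma cons_add_cons (a b : ZMod 2) (x y : Fin n → ZMod 2) :
    (Fin.cons a x : Fin (n + 1) → ZMod 2) + Fin.cons b y = Fin.cons (a + b) (x + y) := by
  ext i
  refine Fin.cases ?_ (fun _ => ?_) i <;> simp

lemma sum_univ_eq_sum_cons (G : (Fin (n + 1) → ZMod 2) → M) :
    ∑ x, G x = ∑ b, ∑ y, G (Fin.cons b y) :=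
  (Fintype.sum_equiv (Fin.consEquiv fun _ => ZMod 2) _ G fun _ => rfl).symm.trans
    (Fintype.sum_prod_type _)

def shortening (C : Submodule (ZMod 2) (Fin (n + 1) → ZMod 2)) :
    Submodule (ZMod 2) (Fin n → ZMod 2) :=
  C.comap ((Fin.consLinearEquiv (ZMod 2) fun _ => ZMod 2).toLinearMap ∘ₗ LinearMap.inr _ _ _)

lemma mem_shortening {C : Submodule (ZMod 2) (Fin (n + 1) → ZMod 2)} {y : Fin n → ZMod 2} :
    y ∈ shortening C ↔ Fin.cons 0 y ∈ C :=
  Iff.rfl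

lemma mem_dualCode {D : Submodule (ZMod 2) (Fin n → ZMod 2)} {a : Fin n → ZMod 2} :
    a ∈ dualCode D ↔ ∀ c ∈ D, a ⬝ᵥ c = 0 :=
  Iff.rfl

lemma cons_dotProduct_cons (a b : ZMod 2) (x y : Fin n → ZMod 2) :
    (Fin.cons a x : Fin (n + 1) → ZMod 2) ⬝ᵥ Fin.cons b y = a * b + x ⬝ᵥ y := by
  simp [dotProduct, Fin.sum_univ_succ]

lemma zmod_two_ne_zero_iff {x : ZMod 2} : x ≠ 0 ↔ x = 1 := by
  revert x; decide

lemma sq_add_sq_one_add (v : ZMod 2 → ℝ) (b : ZMod 2) :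
    v b ^ 2 + v (1 + b) ^ 2 = v 0 ^ 2 + v 1 ^ 2 := by
  by_cases hb : b = 0
  · rw [hb, add_zero]
  · rw [zmod_two_ne_zero_iff.1 hb, show (1 + 1 : ZMod 2) = 0 from rfl, add_comm]

lemma mul_add_mul_sq_le (x y A B : ℝ) :
    (x * A + y * B) ^ 2 ≤ (x ^ 2 + y ^ 2) * (A ^ 2 + B ^ 2) := by
  nlinarith [sq_nonneg (x * B - y * A)]

def prodWeight (w : Fin n → ZMod 2 → ℝ) (x : Fin n → ZMod 2) : ℝ :=
  ∏ i, w i (x i)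

noncomputable def cosetSum (D : Submodule (ZMod 2) (Fin n → ZMod 2)) (w : Fin n → ZMod 2 → ℝ)
    (a : Fin n → ZMod 2) : ℝ :=
  ∑ c ∈ codewords D, prodWeight w (c + a)

lemma prodWeight_cons (w : Fin (n + 1) → ZMod 2 → ℝ) (b : ZMod 2) (y : Fin n → ZMod 2) :
    prodWeight w (Fin.cons b y) = w 0 b * prodWeight (fun i => w i.succ) y :=
  Fin.prod_univ_succ _

section Shortening

variable {C : Submodule (ZMod 2) (Fin (n + 1) → ZMod 2)}

lemma sum_filter_head_eq_zero (H : (Fin (n + 1) → ZMod 2) → M) :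
    ∑ c ∈ (codewords C).filter (· 0 = 0), H c =
      ∑ y ∈ codewords (shortening C), H (Fin.cons 0 y) := by
  simp only [codewords, sum_filter]
  rw [sum_univ_eq_sum_cons, Fintype.sum_eq_single 0 fun b hb => by simp [hb]]
  simp [mem_shortening]

lemma sum_codewords_of_forall_head_eq_zero (hC : ∀ c ∈ C, c 0 = 0)
    (H : (Fin (n + 1) → ZMod 2) → M) :
    ∑ c ∈ codewords C, H c = ∑ y ∈ codewords (shortening C), H (Fin.cons 0 y) := by
  rw [← sum_filter_head_eq_zero, filter_true_of_mem fun c hc => hC c (mem_codewords.1 hc)]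

/-- Translation by a codeword `g` with `g 0 = 1` swaps the two halves `c 0 = 0` and `c 0 = 1`. -/
lemma sum_codewords_of_head_eq_one {g : Fin (n + 1) → ZMod 2} (hg : g ∈ C) (hg0 : g 0 = 1)
    (H : (Fin (n + 1) → ZMod 2) → M) :
    ∑ c ∈ codewords C, H c =
      ∑ y ∈ codewords (shortening C), (H (Fin.cons 0 y) + H (Fin.cons 0 y + g)) := by
  have htranslate : ∑ c ∈ (codewords C).filter (¬ · 0 = 0), H c =
      ∑ c ∈ (codewords C).filter (· 0 = 0), H (c + g) := by
    refine sum_nbij' (· + g) (· + g) ?_ ?_ ?_ ?_ ?_ <;>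
      simp +contextual [mem_codewords, C.add_mem_iff_left hg, hg0, zmod_two_ne_zero_iff, add_assoc,
        CharTwo.add_self_eq_zero]
  rw [← sum_filter_add_sum_filter_not _ (· 0 = 0), htranslate, sum_filter_head_eq_zero,
    sum_filter_head_eq_zero, sum_add_distrib]

lemma cons_mem_dualCode_of_forall_head_eq_zero (hC : ∀ c ∈ C, c 0 = 0) {b : ZMod 2}
    {y : Fin n → ZMod 2} : Fin.cons b y ∈ dualCode C ↔ y ∈ dualCode (shortening C) := by
  simp only [mem_dualCode, Fin.forall_fin_succ_pi, cons_dotProduct_cons, mem_shortening]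
  constructor
  · intro h y' hy'
    simpa using h 0 y' hy'
  · intro h b' y' hc
    obtain rfl : b' = 0 := by simpa using hC _ hc
    simpa using h y' hc

lemma cons_mem_dualCode_of_head_eq_one {g : Fin (n + 1) → ZMod 2} (hg : g ∈ C) (hg0 : g 0 = 1)
    {b : ZMod 2} {y : Fin n → ZMod 2} :
    Fin.cons b y ∈ dualCode C ↔ y ∈ dualCode (shortening C) ∧ b = y ⬝ᵥ Fin.tail g := by
  have hg' : Fin.cons 1 (Fin.tail g) ∈ C := by rwa [← hg0, Fin.cons_self_tail]
  simp only [mem_dualCode, Fin.forall_fin_succ_pi, cons_dotProduct_cons, mem_shortening]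
  constructor
  · intro h
    refine ⟨fun y' hy' => by simpa using h 0 y' hy', ?_⟩
    simpa [CharTwo.add_eq_zero] using h 1 _ hg'
  · rintro ⟨h, rfl⟩ b' y' hc
    by_cases hb' : b' = 0
    · subst hb'
      simpa using h y' hc
    · have hsum : Fin.cons 0 (y' + Fin.tail g) ∈ C := by
        simpa [cons_add_cons, zmod_two_ne_zero_iff.1 hb', CharTwo.add_self_eq_zero] using
          C.add_mem hc hg'
      have hdot := h _ hsum
      rw [dotProduct_add] at hdot
      rw [zmod_two_ne_zero_iff.1 hb', mul_one, add_comm, hdot]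

lemma sum_dualCode_of_forall_head_eq_zero (hC : ∀ c ∈ C, c 0 = 0)
    (G : (Fin (n + 1) → ZMod 2) → M) :
    ∑ a ∈ codewords (dualCode C), G a =
      ∑ b, ∑ y ∈ codewords (dualCode (shortening C)), G (Fin.cons b y) := by
  simp only [codewords, sum_filter]
  rw [sum_univ_eq_sum_cons]
  simp only [cons_mem_dualCode_of_forall_head_eq_zero hC]

lemma sum_dualCode_of_head_eq_one {g : Fin (n + 1) → ZMod 2} (hg : g ∈ C) (hg0 : g 0 = 1)
    (G : (Fin (n + 1) → ZMod 2) → M) :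
    ∑ a ∈ codewords (dualCode C), G a =
      ∑ y ∈ codewords (dualCode (shortening C)), G (Fin.cons (y ⬝ᵥ Fin.tail g) y) := by
  simp only [codewords, sum_filter]
  rw [sum_univ_eq_sum_cons, sum_comm]
  simp [cons_mem_dualCode_of_head_eq_one hg hg0, ite_and]

lemma cosetSum_cons_of_forall_head_eq_zero (hC : ∀ c ∈ C, c 0 = 0) (w : Fin (n + 1) → ZMod 2 → ℝ)
    (b : ZMod 2) (y : Fin n → ZMod 2) :
    cosetSum C w (Fin.cons b y) = w 0 b * cosetSum (shortening C) (fun i => w i.succ) y := by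
  rw [cosetSum, sum_codewords_of_forall_head_eq_zero hC, cosetSum, mul_sum]
  simp only [cons_add_cons, prodWeight_cons, zero_add]

lemma cosetSum_cons_of_head_eq_one {g : Fin (n + 1) → ZMod 2} (hg : g ∈ C) (hg0 : g 0 = 1)
    (w : Fin (n + 1) → ZMod 2 → ℝ) (b : ZMod 2) (y : Fin n → ZMod 2) :
    cosetSum C w (Fin.cons b y) =
      w 0 b * cosetSum (shortening C) (fun i => w i.succ) y +
        w 0 (1 + b) * cosetSum (shortening C) (fun i x => w i.succ (x + Fin.tail g i)) y := by
  have hg_cons : g = Fin.cons 1 (Fin.tail g) := by rw [← hg0, Fin.cons_self_tail]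
  rw [cosetSum, sum_codewords_of_head_eq_one hg hg0, sum_add_distrib, cosetSum, cosetSum,
    mul_sum, mul_sum]
  congr 1 <;> refine sum_congr rfl fun c _ => ?_
  · rw [cons_add_cons, prodWeight_cons, zero_add]
  · rw [hg_cons, cons_add_cons, cons_add_cons, prodWeight_cons, zero_add]
    simp only [prodWeight, Fin.tail_cons, Pi.add_apply, add_right_comm]

lemma card_codewords_of_forall_head_eq_zero (hC : ∀ c ∈ C, c 0 = 0) :
    #(codewords C) = #(codewords (shortening C)) := by
  rw [card_eq_sum_ones, card_eq_sum_ones, sum_codewords_of_forall_head_eq_zero hC]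

lemma card_codewords_of_head_eq_one {g : Fin (n + 1) → ZMod 2} (hg : g ∈ C) (hg0 : g 0 = 1) :
    #(codewords C) = 2 * #(codewords (shortening C)) := by
  rw [card_eq_sum_ones, sum_codewords_of_head_eq_one hg hg0, sum_const, smul_eq_mul, mul_comm]

lemma sum_sq_cosetSum_le_of_forall_head_eq_zero (hC : ∀ c ∈ C, c 0 = 0)
    (w : Fin (n + 1) → ZMod 2 → ℝ)
    (ih : ∀ u : Fin n → ZMod 2 → ℝ,
      ∑ y ∈ codewords (dualCode (shortening C)), cosetSum (shortening C) u y ^ 2 ≤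
        #(codewords (shortening C)) * ∏ i, (u i 0 ^ 2 + u i 1 ^ 2)) :
    ∑ a ∈ codewords (dualCode C), cosetSum C w a ^ 2 ≤
      #(codewords C) * ∏ i, (w i 0 ^ 2 + w i 1 ^ 2) := by
  set S := shortening C
  set u : Fin n → ZMod 2 → ℝ := fun i => w i.succ
  calc ∑ a ∈ codewords (dualCode C), cosetSum C w a ^ 2
      = ∑ b, ∑ y ∈ codewords (dualCode S), (w 0 b * cosetSum S u y) ^ 2 := by
        rw [sum_dualCode_of_forall_head_eq_zero hC]
        exact sum_congr rfl fun b _ => sum_congr rfl fun y _ => by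
          rw [cosetSum_cons_of_forall_head_eq_zero hC]
    _ = (w 0 0 ^ 2 + w 0 1 ^ 2) * ∑ y ∈ codewords (dualCode S), cosetSum S u y ^ 2 := by
        simp only [mul_pow, ← mul_sum, ← sum_mul]
        congr 1
        exact Fin.sum_univ_two _
    _ ≤ (w 0 0 ^ 2 + w 0 1 ^ 2) * (#(codewords S) * ∏ i, (u i 0 ^ 2 + u i 1 ^ 2)) := by
        gcongr
        exact ih u
    _ = #(codewords C) * ∏ i, (w i 0 ^ 2 + w i 1 ^ 2) := by
        rw [card_codewords_of_forall_head_eq_zero hC, Fin.prod_univ_succ]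
        ring

lemma sum_sq_cosetSum_le_of_head_eq_one {g : Fin (n + 1) → ZMod 2} (hg : g ∈ C) (hg0 : g 0 = 1)
    (w : Fin (n + 1) → ZMod 2 → ℝ)
    (ih : ∀ u : Fin n → ZMod 2 → ℝ,
      ∑ y ∈ codewords (dualCode (shortening C)), cosetSum (shortening C) u y ^ 2 ≤
        #(codewords (shortening C)) * ∏ i, (u i 0 ^ 2 + u i 1 ^ 2)) :
    ∑ a ∈ codewords (dualCode C), cosetSum C w a ^ 2 ≤
      #(codewords C) * ∏ i, (w i 0 ^ 2 + w i 1 ^ 2) := by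
  set S := shortening C
  set u : Fin n → ZMod 2 → ℝ := fun i => w i.succ
  set u' : Fin n → ZMod 2 → ℝ := fun i x => w i.succ (x + Fin.tail g i)
  calc ∑ a ∈ codewords (dualCode C), cosetSum C w a ^ 2
      = ∑ y ∈ codewords (dualCode S), (w 0 (y ⬝ᵥ Fin.tail g) * cosetSum S u y +
          w 0 (1 + y ⬝ᵥ Fin.tail g) * cosetSum S u' y) ^ 2 := by
        rw [sum_dualCode_of_head_eq_one hg hg0]
        exact sum_congr rfl fun y _ => by rw [cosetSum_cons_of_head_eq_one hg hg0]
    _ ≤ ∑ y ∈ codewords (dualCode S),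
          (w 0 0 ^ 2 + w 0 1 ^ 2) * (cosetSum S u y ^ 2 + cosetSum S u' y ^ 2) := by
        gcongr with y
        rw [← sq_add_sq_one_add (w 0) (y ⬝ᵥ Fin.tail g)]
        apply mul_add_mul_sq_le
    _ = (w 0 0 ^ 2 + w 0 1 ^ 2) * (∑ y ∈ codewords (dualCode S), cosetSum S u y ^ 2 +
          ∑ y ∈ codewords (dualCode S), cosetSum S u' y ^ 2) := by
        rw [← mul_sum, sum_add_distrib]
    _ ≤ (w 0 0 ^ 2 + w 0 1 ^ 2) * (#(codewords S) * ∏ i, (u i 0 ^ 2 + u i 1 ^ 2) +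
          #(codewords S) * ∏ i, (u' i 0 ^ 2 + u' i 1 ^ 2)) := by
        gcongr
        exacts [ih u, ih u']
    _ = #(codewords C) * ∏ i, (w i 0 ^ 2 + w i 1 ^ 2) := by
        simp only [u', zero_add, sq_add_sq_one_add]
        rw [card_codewords_of_head_eq_one hg hg0, Fin.prod_univ_succ]
        push_cast
        ring

end Shortening

theorem sum_sq_cosetSum_le (C : Submodule (ZMod 2) (Fin n → ZMod 2)) (w : Fin n → ZMod 2 → ℝ) :
    ∑ a ∈ codewords (dualCode C), cosetSum C w a ^ 2 ≤
      #(codewords C) * ∏ i, (w i 0 ^ 2 + w i 1 ^ 2) := by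
  induction n with
  | zero =>
    have hsingleton (D : Submodule (ZMod 2) (Fin 0 → ZMod 2)) : codewords D = {0} :=
      eq_singleton_iff_unique_mem.2 ⟨mem_codewords.2 D.zero_mem, fun x _ => Subsingleton.elim x 0⟩
    simp [hsingleton, cosetSum, prodWeight]
  | succ n ih =>
    by_cases hg : ∃ g ∈ C, g 0 = 1
    · obtain ⟨g, hg, hg0⟩ := hg
      exact sum_sq_cosetSum_le_of_head_eq_one hg hg0 w (ih _)
    · refine sum_sq_cosetSum_le_of_forall_head_eq_zero (fun c hc => ?_) w (ih _)
      by_contra h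
      exact hg ⟨c, hc, zmod_two_ne_zero_iff.1 h⟩

lemma prodWeight_ite (s t : ℝ) (x : Fin n → ZMod 2) :
    prodWeight (fun _ b => if b = 0 then s else t) x =
      s ^ (n - hammingNorm x) * t ^ hammingNorm x := by
  have hcard := card_filter_add_card_filter_not (s := univ) fun i => x i = 0
  rw [card_univ, Fintype.card_fin] at hcard
  rw [prodWeight, prod_ite, prod_const, prod_const, hammingNorm]
  simp only [ne_eq]
  congr 2
  omega

end BinaryCode

open BinaryCode

theorem lemma_III_2 (n k : ℕ) (C : Submodule (ZMod 2) (Fin n → ZMod 2))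
    (hk : Module.finrank (ZMod 2) C = k) (θ : ℝ) :
    (1 / 2 ^ k : ℝ) *
      ∑ a ∈ codewords (dualCode C),
        (∑ c ∈ codewords C,
            Real.sin θ ^ (n - hammingNorm (c + a)) *
              Real.cos θ ^ (hammingNorm (c + a))) ^ 2 ≤ 1 := by
  have hbound := sum_sq_cosetSum_le C fun _ b => if b = 0 then Real.sin θ else Real.cos θ
  simp only [cosetSum, prodWeight_ite, card_codewords, hk, if_pos, one_ne_zero, if_false,
    Real.sin_sq_add_cos_sq, prod_const_one, mul_one] at hbound
  rw [one_div, inv_mul_le_iff₀ (by positivity), mul_one]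
  exact_mod_cast hbound
end

section
/- Let C be a k-dimensional weakly self-dual binary linear code of length n (i.e., C ⊆ C^⊥) and θ any real number. Then | Σ_{c ∈ C^⊥} (sin θ)^{n − wt(c)} (cos θ)^{wt(c)} | ≤ 2^{(n−2k)/2}. -/
open scoped Classical

/-!
MacWilliams: `|C| · W_{C^⊥}(s, c) = W_C(s + c, s - c)`, where
`W_D(s, c) = ∑_{x ∈ D} s^(n - wt x) c^(wt x)`. For `s = sin θ`, `c = cos θ` put
`p = (s + c)/√2`, `q = (s - c)/√2`, so `p² + q² = 1` and by homogeneity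
`W_C(s + c, s - c) = 2^(n/2) W_C(p, q)`. It remains to see `|W_C(p, q)| ≤ 1`. The `n`-fold
Kronecker power `K` of the reflection `[[p, q], [q, -p]]` is orthogonal, and its entry at `(x, y)`
is `(-1)^(x ⬝ y) ∏ᵢ (p or q according as (x + y)ᵢ = 0)`. Self-orthogonality kills the sign on
`C × C`, so with `u` the indicator of `C`, `⟨u, K u⟩ = |C| · W_C(p, q)`, while
`|⟨u, K u⟩| ≤ ⟨u, u⟩ = |C|`.
-/

namespace Matrix

def kroneckerPower (ι : Type*) [Fintype ι] {α R : Type*} [CommMonoid R] (M : Matrix α α R) :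
    Matrix (ι → α) (ι → α) R :=
  of fun x y => ∏ i, M (x i) (y i)

variable {ι α R : Type*} [Fintype ι]

@[simp]
theorem kroneckerPower_apply [CommMonoid R] (M : Matrix α α R) (x y : ι → α) :
    kroneckerPower ι M x y = ∏ i, M (x i) (y i) := rfl

theorem kroneckerPower_transpose [CommMonoid R] (M : Matrix α α R) :
    (kroneckerPower ι M)ᵀ = kroneckerPower ι Mᵀ := rfl

theorem kroneckerPower_mul [Fintype α] [CommSemiring R] [DecidableEq ι] (M N : Matrix α α R) :
    kroneckerPower ι (M * N) = kroneckerPower ι M * kroneckerPower ι N := by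
  ext x y
  simp only [kroneckerPower_apply, mul_apply, Fintype.prod_sum, ← Finset.prod_mul_distrib]

theorem kroneckerPower_one [CommSemiring R] [DecidableEq α] :
    kroneckerPower ι (1 : Matrix α α R) = 1 := by
  ext x y
  simp only [kroneckerPower_apply, one_apply, Fintype.prod_boole, funext_iff]

theorem kroneckerPower_transpose_mul_self [Fintype α] [CommSemiring R] [DecidableEq ι]
    [DecidableEq α] {M : Matrix α α R} (hM : Mᵀ * M = 1) :
    (kroneckerPower ι M)ᵀ * kroneckerPower ι M = 1 := by
  rw [kroneckerPower_transpose, ← kroneckerPower_mul, hM, kroneckerPower_one]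

theorem abs_dotProduct_mulVec_le_of_transpose_mul_self {n R : Type*} [Fintype n] [DecidableEq n]
    [Field R] [LinearOrder R] [IsStrictOrderedRing R] {M : Matrix n n R} (hM : Mᵀ * M = 1)
    (u : n → R) :
    |u ⬝ᵥ M *ᵥ u| ≤ u ⬝ᵥ u := by
  have hnorm : M *ᵥ u ⬝ᵥ M *ᵥ u = u ⬝ᵥ u := by
    rw [dotProduct_mulVec, ← vecMul_transpose, vecMul_vecMul, hM, vecMul_one]
  refine abs_le_of_sq_le_sq ?_ (Finset.sum_nonneg fun i _ => mul_self_nonneg (u i))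
  calc (u ⬝ᵥ M *ᵥ u) ^ 2 ≤ (u ⬝ᵥ u) * (M *ᵥ u ⬝ᵥ M *ᵥ u) := by
        simpa [dotProduct, ← sq] using Finset.sum_mul_sq_le_sq_mul_sq Finset.univ u (M *ᵥ u)
    _ = (u ⬝ᵥ u) ^ 2 := by rw [hnorm, sq]

end Matrix

theorem zmod_two_eq_zero_or_one : ∀ t : ZMod 2, t = 0 ∨ t = 1 := by
  decide

theorem ZMod.sum_univ_two {M : Type*} [AddCommMonoid M] (f : ZMod 2 → M) :
    ∑ b, f b = f 0 + f 1 :=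
  Fin.sum_univ_two f

noncomputable def binarySign : AddChar (ZMod 2) ℝ :=
  AddChar.zmodChar 2 (ζ := -1) (by norm_num)

@[simp]
theorem binarySign_zero : binarySign 0 = 1 := AddChar.map_zero_eq_one _

@[simp]
theorem binarySign_one : binarySign 1 = -1 := by
  simp [binarySign, AddChar.zmodChar_apply, ZMod.val_one]

theorem binarySign_dotProduct {n : ℕ} (a x : Fin n → ZMod 2) :
    binarySign (a ⬝ᵥ x) = ∏ i, binarySign (a i * x i) := by
  have h := map_prod binarySign.toMonoidHom (fun i => Multiplicative.ofAdd (a i * x i)) .univ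
  simp only [AddChar.toMonoidHom_apply, toAdd_prod, toAdd_ofAdd] at h
  exact h

noncomputable def weightEnumerator {n : ℕ} (C : Submodule (ZMod 2) (Fin n → ZMod 2)) (s c : ℝ) :
    ℝ :=
  ∑ x ∈ codewords C, s ^ (n - hammingNorm x) * c ^ hammingNorm x

open Matrix

section BinaryCode

variable {n : ℕ} (C : Submodule (ZMod 2) (Fin n → ZMod 2))

theorem mem_dualCode {a : Fin n → ZMod 2} : a ∈ dualCode C ↔ ∀ c ∈ C, a ⬝ᵥ c = 0 := Iff.rfl

theorem mem_codewords {x : Fin n → ZMod 2} : x ∈ codewords C ↔ x ∈ C := by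
  simp [codewords]

theorem sum_codewords_eq_sum_ite (f : (Fin n → ZMod 2) → ℝ) :
    ∑ x ∈ codewords C, f x = ∑ x, if x ∈ C then f x else 0 :=
  Finset.sum_filter _ _

theorem card_codewords : (codewords C).card = 2 ^ Module.finrank (ZMod 2) C :=
  calc (codewords C).card = Fintype.card C := (Fintype.card_subtype _).symm
    _ = 2 ^ Module.finrank (ZMod 2) C := by rw [Module.card_eq_pow_finrank (K := ZMod 2), ZMod.card]

theorem sum_codewords_add_right {y : Fin n → ZMod 2} (hy : y ∈ C)
    (f : (Fin n → ZMod 2) → ℝ) : ∑ x ∈ codewords C, f (x + y) = ∑ x ∈ codewords C, f x :=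
  Finset.sum_equiv (Equiv.addRight y) (fun x => by simp [mem_codewords, C.add_mem_iff_left hy])
    (fun _ _ => rfl)

theorem sum_codewords_binarySign_dotProduct (a : Fin n → ZMod 2) :
    ∑ x ∈ codewords C, binarySign (a ⬝ᵥ x)
      = if a ∈ dualCode C then ((codewords C).card : ℝ) else 0 := by
  split_ifs with ha
  · rw [Finset.sum_congr rfl fun x hx => by
      rw [(mem_dualCode C).1 ha x ((mem_codewords C).1 hx), binarySign_zero]]
    simp
  · obtain ⟨y, hy, hay⟩ : ∃ y ∈ C, a ⬝ᵥ y ≠ 0 := by simpa [mem_dualCode] using ha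
    have hsign : binarySign (a ⬝ᵥ y) = -1 := by
      rw [(zmod_two_eq_zero_or_one _).resolve_left hay, binarySign_one]
    have h := sum_codewords_add_right C hy fun x => binarySign (a ⬝ᵥ x)
    simp only [dotProduct_add, AddChar.map_add_eq_mul, hsign, ← Finset.sum_mul] at h
    linarith

theorem card_mul_sum_dualCode (f : (Fin n → ZMod 2) → ℝ) :
    ((codewords C).card : ℝ) * ∑ a ∈ codewords (dualCode C), f a
      = ∑ x ∈ codewords C, ∑ a, binarySign (a ⬝ᵥ x) * f a := by
  rw [Finset.sum_comm, sum_codewords_eq_sum_ite, Finset.mul_sum]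
  refine Finset.sum_congr rfl fun a _ => ?_
  rw [← Finset.sum_mul, sum_codewords_binarySign_dotProduct]
  split_ifs <;> simp

theorem sum_binarySign_dotProduct_mul_prod (x : Fin n → ZMod 2) (g : ZMod 2 → ℝ) :
    ∑ a, binarySign (a ⬝ᵥ x) * ∏ i, g (a i) = ∏ i, (g 0 + binarySign (x i) * g 1) := by
  simp only [binarySign_dotProduct, ← Finset.prod_mul_distrib]
  rw [← Fintype.prod_sum fun i b => binarySign (b * x i) * g b]
  refine Finset.prod_congr rfl fun i _ => ?_
  simp [ZMod.sum_univ_two]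

theorem prod_ite_eq_pow_hammingNorm (x : Fin n → ZMod 2) (s c : ℝ) :
    ∏ i, (if x i = 0 then s else c) = s ^ (n - hammingNorm x) * c ^ hammingNorm x := by
  have hsplit := Finset.card_filter_add_card_filter_not (s := .univ) fun i => x i = 0
  rw [Finset.card_univ, Fintype.card_fin] at hsplit
  rw [Finset.prod_ite, Finset.prod_const, Finset.prod_const, hammingNorm]
  simp only [ne_eq]
  congr 2
  omega

theorem weightEnumerator_eq_sum_prod (s c : ℝ) :
    weightEnumerator C s c = ∑ x ∈ codewords C, ∏ i, if x i = 0 then s else c := by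
  simp only [weightEnumerator, prod_ite_eq_pow_hammingNorm]

theorem weightEnumerator_mul_mul (t s c : ℝ) :
    weightEnumerator C (t * s) (t * c) = t ^ n * weightEnumerator C s c := by
  simp only [weightEnumerator_eq_sum_prod, ← mul_ite, Finset.prod_mul_distrib, Finset.prod_const,
    Finset.card_univ, Fintype.card_fin, Finset.mul_sum]

theorem card_mul_weightEnumerator_dualCode (s c : ℝ) :
    ((codewords C).card : ℝ) * weightEnumerator (dualCode C) s c
      = weightEnumerator C (s + c) (s - c) := by
  rw [weightEnumerator_eq_sum_prod, card_mul_sum_dualCode, weightEnumerator_eq_sum_prod]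
  refine Finset.sum_congr rfl fun x _ => ?_
  rw [sum_binarySign_dotProduct_mul_prod x fun b => if b = 0 then s else c]
  refine Finset.prod_congr rfl fun i _ => ?_
  rcases zmod_two_eq_zero_or_one (x i) with h | h <;> simp [h, sub_eq_add_neg]

/-- `!![p, q; q, -p]`, written so that its Kronecker powers factor as in
`kroneckerPower_reflectionMatrix_apply`. -/
noncomputable def reflectionMatrix (p q : ℝ) : Matrix (ZMod 2) (ZMod 2) ℝ :=
  .of fun a b => binarySign (a * b) * if a + b = 0 then p else q

theorem reflectionMatrix_transpose_mul_self {p q : ℝ} (hpq : p ^ 2 + q ^ 2 = 1) :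
    (reflectionMatrix p q)ᵀ * reflectionMatrix p q = 1 := by
  ext a b
  rcases zmod_two_eq_zero_or_one a with rfl | rfl <;>
    rcases zmod_two_eq_zero_or_one b with rfl | rfl <;>
    simp [reflectionMatrix, mul_apply, ZMod.sum_univ_two, CharTwo.add_self_eq_zero] <;> linarith

theorem kroneckerPower_reflectionMatrix_apply (p q : ℝ) (x y : Fin n → ZMod 2) :
    kroneckerPower (Fin n) (reflectionMatrix p q) x y
      = binarySign (x ⬝ᵥ y) * ∏ i, if (x + y) i = 0 then p else q := by
  simp only [kroneckerPower_apply, reflectionMatrix, of_apply, Finset.prod_mul_distrib,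
    binarySign_dotProduct, Pi.add_apply]

theorem abs_weightEnumerator_le_one (hC : C ≤ dualCode C) {p q : ℝ} (hpq : p ^ 2 + q ^ 2 = 1) :
    |weightEnumerator C p q| ≤ 1 := by
  set u : (Fin n → ZMod 2) → ℝ := fun x => if x ∈ C then 1 else 0
  have hcard : (0 : ℝ) < (codewords C).card := by
    rw [card_codewords]
    positivity
  have huu : u ⬝ᵥ u = (codewords C).card := by
    simp +contextual [u, dotProduct, codewords]
  have hrow : ∀ x ∈ C,
      ∑ y ∈ codewords C, kroneckerPower (Fin n) (reflectionMatrix p q) x y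
        = weightEnumerator C p q := by
    intro x hx
    calc ∑ y ∈ codewords C, kroneckerPower (Fin n) (reflectionMatrix p q) x y
        = ∑ y ∈ codewords C, ∏ i, if (y + x) i = 0 then p else q := by
          refine Finset.sum_congr rfl fun y hy => ?_
          rw [kroneckerPower_reflectionMatrix_apply,
            (mem_dualCode C).1 (hC hx) y ((mem_codewords C).1 hy), binarySign_zero, one_mul,
            add_comm]
      _ = weightEnumerator C p q := by
          rw [sum_codewords_add_right C hx fun z => ∏ i, if z i = 0 then p else q,
            weightEnumerator_eq_sum_prod]
  have huKu : u ⬝ᵥ kroneckerPower (Fin n) (reflectionMatrix p q) *ᵥ u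
      = (codewords C).card * weightEnumerator C p q := by
    simp only [u, dotProduct, mulVec, mul_boole, boole_mul, ← sum_codewords_eq_sum_ite]
    rw [Finset.sum_congr rfl fun x hx => hrow x ((mem_codewords C).1 hx)]
    simp
  have h := abs_dotProduct_mulVec_le_of_transpose_mul_self
    (kroneckerPower_transpose_mul_self (reflectionMatrix_transpose_mul_self hpq)) u
  rw [huKu, huu, abs_mul, abs_of_pos hcard] at h
  exact le_of_mul_le_mul_left (by simpa using h) hcard

end BinaryCode

theorem lemma_III_3 (n k : ℕ) (C : Submodule (ZMod 2) (Fin n → ZMod 2))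
    (hk : Module.finrank (ZMod 2) C = k) (hC : C ≤ dualCode C) (θ : ℝ) :
    |∑ c ∈ codewords (dualCode C),
        Real.sin θ ^ (n - hammingNorm c) * Real.cos θ ^ (hammingNorm c)|
      ≤ 2 ^ (((n : ℝ) - 2 * k) / 2) := by
  change |weightEnumerator (dualCode C) (Real.sin θ) (Real.cos θ)| ≤ _
  set s := Real.sin θ
  set c := Real.cos θ
  have hsqrt : √2 ≠ 0 := by positivity
  have hunit : ((s + c) / √2) ^ 2 + ((s - c) / √2) ^ 2 = 1 := by
    rw [div_pow, div_pow, Real.sq_sqrt zero_le_two]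
    linear_combination Real.sin_sq_add_cos_sq θ
  have hMacWilliams : (2 : ℝ) ^ k * weightEnumerator (dualCode C) s c
      = √2 ^ n * weightEnumerator C ((s + c) / √2) ((s - c) / √2) := by
    rw [← weightEnumerator_mul_mul, mul_div_cancel₀ _ hsqrt, mul_div_cancel₀ _ hsqrt,
      ← card_mul_weightEnumerator_dualCode, card_codewords, hk, Nat.cast_pow, Nat.cast_ofNat]
  have hbound : (2 : ℝ) ^ k * |weightEnumerator (dualCode C) s c| ≤ √2 ^ n := by
    rw [← abs_of_pos (by positivity : (0 : ℝ) < 2 ^ k), ← abs_mul, hMacWilliams, abs_mul,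
      abs_of_pos (by positivity : (0 : ℝ) < √2 ^ n)]
    exact mul_le_of_le_one_right (by positivity) (abs_weightEnumerator_le_one C hC hunit)
  have hrpow : (2 : ℝ) ^ (((n : ℝ) - 2 * k) / 2) = √2 ^ n / 2 ^ k := by
    rw [sub_div, mul_div_cancel_left₀ _ two_ne_zero, Real.rpow_sub zero_lt_two, Real.rpow_natCast,
      Real.sqrt_eq_rpow, ← Real.rpow_mul_natCast zero_le_two, one_div_mul_eq_div]
  rw [hrpow, le_div_iff₀ (by positivity), mul_comm]
  exact hbound
end

section
/- Let A, w, n be such that 0 < w < n/2 and A is a nonnegative real with A·λ^{w/2} ≤ (1+λ)^{n/2} for all λ ∈ (0,1). Then A ≤ 2^{(n/2)·H₂(w/n)}, where H₂(x) = −x log₂ x − (1−x) log₂(1−x). -/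
open Real

lemma log_one_add_sub_mul_log_eq_binEntropy {p : ℝ} (hp0 : 0 < p) (hp1 : p < 1) :
    log (1 + p / (1 - p)) - p * log (p / (1 - p)) = binEntropy p := by
  have hq : 1 - p ≠ 0 := by linarith
  have h_one_add : 1 + p / (1 - p) = (1 - p)⁻¹ := by field_simp; ring
  rw [h_one_add, log_inv, log_div hp0.ne' hq, binEntropy, log_inv, log_inv]
  ring

lemma neg_mul_logb_sub_mul_logb_eq_binEntropy_div_log (p : ℝ) :
    -p * logb 2 p - (1 - p) * logb 2 (1 - p) = binEntropy p / log 2 := by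
  rw [binEntropy, logb, logb, log_inv, log_inv]
  ring

/-- The Chernoff-type optimisation: `λ = p / (1 - p)` minimises `(1 + λ) / λ ^ p`. -/
lemma le_exp_mul_binEntropy_of_mul_rpow_le {A m p : ℝ} (hp0 : 0 < p) (hp : p < 1 / 2)
    (h : ∀ lam : ℝ, 0 < lam → lam < 1 → A * lam ^ (p * m) ≤ (1 + lam) ^ m) :
    A ≤ exp (m * binEntropy p) := by
  have hq : 0 < 1 - p := by linarith
  set lam := p / (1 - p)
  have hlam0 : 0 < lam := div_pos hp0 hq
  have hlam1 : lam < 1 := (div_lt_one hq).2 (by linarith)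
  calc A ≤ (1 + lam) ^ m / lam ^ (p * m) :=
        (le_div_iff₀ (rpow_pos_of_pos hlam0 _)).2 (h lam hlam0 hlam1)
    _ = exp (m * (log (1 + lam) - p * log lam)) := by
        rw [rpow_def_of_pos (by linarith), rpow_def_of_pos hlam0, ← exp_sub]
        ring_nf
    _ = exp (m * binEntropy p) := by
        rw [log_one_add_sub_mul_log_eq_binEntropy hp0 (by linarith)]

theorem bound_from_lambda_general (A w n : ℝ) (hw : 0 < w) (hwn : w < n / 2)
    (h : ∀ lam : ℝ, 0 < lam → lam < 1 → A * lam ^ (w / 2) ≤ (1 + lam) ^ (n / 2)) :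
    A ≤ (2 : ℝ) ^
        ((n / 2) * (-(w / n) * Real.logb 2 (w / n) - (1 - w / n) * Real.logb 2 (1 - w / n))) := by
  have hn : 0 < n := by linarith
  have hp : w / n < 1 / 2 := by rw [div_lt_iff₀ hn]; linarith
  have hpm : w / n * (n / 2) = w / 2 := by field_simp
  have hexponent :
      log 2 * (n / 2 * (binEntropy (w / n) / log 2)) = n / 2 * binEntropy (w / n) := by
    field_simp [(log_pos one_lt_two).ne']
  rw [neg_mul_logb_sub_mul_logb_eq_binEntropy_div_log, rpow_def_of_pos two_pos, hexponent]
  exact le_exp_mul_binEntropy_of_mul_rpow_le (div_pos hw hn) hp (hpm ▸ h)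

theorem bound_from_lambda (A w n : ℝ) (hA : 0 ≤ A) (hw : 0 < w) (hwn : w < n / 2)
    (h : ∀ lam : ℝ, 0 < lam → lam < 1 → A * lam ^ (w / 2) ≤ (1 + lam) ^ (n / 2)) :
    A ≤ (2 : ℝ) ^
        ((n / 2) * (-(w / n) * Real.logb 2 (w / n) - (1 - w / n) * Real.logb 2 (1 - w / n))) :=
  bound_from_lambda_general A w n hw hwn h
end

section
/- Let C be a weakly self-dual binary linear code of even length n with weight distribution (A_0, …, A_n). Then for every integer w with 0 < w < n/2, A_w ≤ 2^{(1/2)·H₂(w/n)·n}, where H₂(x) = −x log₂ x − (1−x) log₂(1−x) is the binary entropy function. -/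
open scoped Classical

/-! Take a set `I` of coordinates, minimal such that every codeword of `C` is determined by its
restriction to `I`. For `i ∈ I`, minimality gives a codeword `v` with `v i ≠ 0` vanishing on the
rest of `I`; since `C ⊆ C^⊥`, a codeword vanishing off `I` is orthogonal to `v`, hence vanishes at
`i`. So codewords are determined by their restrictions to `I` and to `Iᶜ` alike.

Fix `0 < p < 1` and weight a vector by `∏ᵢ g (cᵢ)`, where `g 0 = √(1 - p)` and `g 1 = √p`, so that
`∑_b g(b)² = 1`. Splitting the product over `I` and `Iᶜ` and applying Cauchy–Schwarz, the two
injective restrictions bound the total weight of `C` by `1`. A codeword of weight `w` weighs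
`√p ^ w * √(1 - p) ^ (n - w)`, and at `p = w / n` the reciprocal of this is `2 ^ (H₂(p) n / 2)`. -/

open Finset

section RestrictedProducts

variable {ι β : Type*} [Fintype β]

theorem sum_prod_restrict_le_pow {S : Finset (ι → β)} {J : Finset ι}
    (hJ : Set.InjOn J.restrict (S : Set (ι → β))) {f : β → ℝ} (hf : ∀ b, 0 ≤ f b) :
    ∑ c ∈ S, ∏ i ∈ J, f (c i) ≤ (∑ b, f b) ^ #J := by
  classical
  calc ∑ c ∈ S, ∏ i ∈ J, f (c i)
      = ∑ v ∈ S.image J.restrict, ∏ i, f (v i) := by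
        rw [sum_image hJ]
        exact sum_congr rfl fun c _ => (prod_coe_sort J fun i => f (c i)).symm
    _ ≤ ∑ v : J → β, ∏ i, f (v i) :=
        sum_le_sum_of_subset_of_nonneg (subset_univ _)
          fun v _ _ => prod_nonneg fun i _ => hf (v i)
    _ = (∑ b, f b) ^ #J := by
        rw [← Fintype.prod_sum, prod_const, card_univ, Fintype.card_coe]

variable [Fintype ι] [DecidableEq ι]

theorem sq_sum_prod_le_pow {S : Finset (ι → β)} {I : Finset ι}
    (hI : Set.InjOn I.restrict (S : Set (ι → β)))
    (hIc : Set.InjOn Iᶜ.restrict (S : Set (ι → β))) (g : β → ℝ) :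
    (∑ c ∈ S, ∏ i, g (c i)) ^ 2 ≤ (∑ b, g b ^ 2) ^ Fintype.card ι := by
  have hg2 : ∀ b, 0 ≤ g b ^ 2 := fun b => sq_nonneg (g b)
  calc (∑ c ∈ S, ∏ i, g (c i)) ^ 2
      = (∑ c ∈ S, (∏ i ∈ I, g (c i)) * ∏ i ∈ Iᶜ, g (c i)) ^ 2 := by
        simp only [prod_mul_prod_compl]
    _ ≤ (∑ c ∈ S, (∏ i ∈ I, g (c i)) ^ 2) * ∑ c ∈ S, (∏ i ∈ Iᶜ, g (c i)) ^ 2 :=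
        sum_mul_sq_le_sq_mul_sq _ _ _
    _ = (∑ c ∈ S, ∏ i ∈ I, g (c i) ^ 2) * ∑ c ∈ S, ∏ i ∈ Iᶜ, g (c i) ^ 2 := by
        simp only [prod_pow]
    _ ≤ (∑ b, g b ^ 2) ^ #I * (∑ b, g b ^ 2) ^ #Iᶜ :=
        mul_le_mul (sum_prod_restrict_le_pow hI hg2) (sum_prod_restrict_le_pow hIc hg2)
          (sum_nonneg fun c _ => prod_nonneg fun i _ => hg2 _)
          (pow_nonneg (sum_nonneg fun b _ => hg2 b) _)
    _ = (∑ b, g b ^ 2) ^ Fintype.card ι := by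
        rw [← pow_add, card_add_card_compl]

end RestrictedProducts

theorem prod_ite_eq_zero_eq_pow_hammingNorm {ι β M : Type*} [Fintype ι] [DecidableEq β]
    [Zero β] [CommMonoid M] (c : ι → β) (x y : M) :
    ∏ i, (if c i = 0 then y else x) =
      x ^ hammingNorm c * y ^ (Fintype.card ι - hammingNorm c) := by
  have hsplit := card_filter_add_card_filter_not (s := univ) fun i => c i ≠ 0
  simp only [ne_eq, not_not, card_univ] at hsplit
  rw [prod_ite, prod_const, prod_const, mul_comm, hammingNorm]
  simp only [ne_eq]
  congr 2
  omega

theorem injOn_restrict_iff {ι R : Type*} [Ring R] (C : Submodule R (ι → R)) (I : Finset ι) :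
    Set.InjOn I.restrict (C : Set (ι → R)) ↔ ∀ x ∈ C, (∀ i ∈ I, x i = 0) → x = 0 := by
  constructor
  · intro h x hx hxI
    exact h hx C.zero_mem (funext fun i => hxI i i.2)
  · intro h c hc c' hc' hcc
    refine sub_eq_zero.mp (h _ (C.sub_mem hc hc') fun i hi => ?_)
    simpa [sub_eq_zero] using congrFun hcc ⟨i, hi⟩

theorem two_rpow_half_entropy_mul_eq {n w : ℕ} (hw : 0 < w) (hwn : w < n) :
    (2 : ℝ) ^ ((1 / 2 : ℝ) *
        (-(w / n : ℝ) * Real.logb 2 (w / n) - (1 - w / n) * Real.logb 2 (1 - w / n)) * n) =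
      (√(w / n) ^ w * √(1 - w / n) ^ (n - w))⁻¹ := by
  have hn : (0 : ℝ) < n := by exact_mod_cast hw.trans hwn
  set p : ℝ := w / n
  have hp0 : 0 < p := by positivity
  have hp1 : p < 1 := (div_lt_one hn).2 (by exact_mod_cast hwn)
  have hpn : p * n = w := div_mul_cancel₀ _ hn.ne'
  have hR : 0 < √p ^ w * √(1 - p) ^ (n - w) := by
    have := Real.sqrt_pos.2 (sub_pos.2 hp1)
    positivity
  conv_rhs => rw [← Real.rpow_logb two_pos (by norm_num) (inv_pos.2 hR)]
  congr 1
  rw [Real.logb_inv, Real.logb_mul (by positivity) (by positivity), Real.logb_pow, Real.logb_pow,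
    Nat.cast_sub hwn.le]
  simp only [Real.logb, Real.log_sqrt hp0.le, Real.log_sqrt (sub_pos.2 hp1).le]
  rw [← hpn]
  ring

theorem injOn_restrict_compl_of_minimal {n : ℕ} {C : Submodule (ZMod 2) (Fin n → ZMod 2)}
    (hC : C ≤ dualCode C) {I : Finset (Fin n)}
    (hI : Minimal (fun J : Finset (Fin n) => Set.InjOn J.restrict (C : Set (Fin n → ZMod 2))) I) :
    Set.InjOn Iᶜ.restrict (C : Set (Fin n → ZMod 2)) := by
  simp only [injOn_restrict_iff] at hI ⊢
  obtain ⟨hIdet, hImin⟩ := hI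
  intro x hx hxout
  funext i
  by_cases hi : i ∈ I
  swap
  · exact hxout i (mem_compl.2 hi)
  have hnot : ¬ ∀ v ∈ C, (∀ j ∈ I.erase i, v j = 0) → v = 0 := fun h =>
    (erase_ssubset hi).not_subset (hImin h (erase_subset i I))
  push Not at hnot
  obtain ⟨v, hv, hv0, hvne⟩ := hnot
  have hvi : v i ≠ 0 := fun h => hvne <| hIdet v hv fun j hj =>
    if hji : j = i then hji ▸ h else hv0 j (mem_erase.2 ⟨hji, hj⟩)
  have hsingle : ∑ j, x j * v j = x i * v i := by
    refine sum_eq_single i (fun j _ hji => ?_) (by simp)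
    by_cases hj : j ∈ I
    · rw [hv0 j (mem_erase.2 ⟨hji, hj⟩), mul_zero]
    · rw [hxout j (mem_compl.2 hj), zero_mul]
  have horth : ∑ j, x j * v j = 0 := hC hx v hv
  exact (mul_eq_zero.1 (hsingle ▸ horth)).resolve_right hvi

theorem exists_injOn_restrict_and_compl {n : ℕ} {C : Submodule (ZMod 2) (Fin n → ZMod 2)}
    (hC : C ≤ dualCode C) :
    ∃ I : Finset (Fin n), Set.InjOn I.restrict (C : Set (Fin n → ZMod 2)) ∧
      Set.InjOn Iᶜ.restrict (C : Set (Fin n → ZMod 2)) := by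
  have huniv : Set.InjOn (univ : Finset (Fin n)).restrict (C : Set (Fin n → ZMod 2)) :=
    (injOn_restrict_iff C univ).2 fun x _ hx => funext fun i => hx i (mem_univ i)
  obtain ⟨I, hI⟩ := exists_minimal_of_wellFoundedLT
    (fun J : Finset (Fin n) => Set.InjOn J.restrict (C : Set (Fin n → ZMod 2))) ⟨univ, huniv⟩
  exact ⟨I, hI.prop, injOn_restrict_compl_of_minimal hC hI⟩

theorem weightDist_mul_le_sum_prod {n : ℕ} (C : Submodule (ZMod 2) (Fin n → ZMod 2)) (w : ℕ)
    {x y : ℝ} (hx : 0 ≤ x) (hy : 0 ≤ y) :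
    weightDist C w * (x ^ w * y ^ (n - w)) ≤
      ∑ c ∈ codewords C, ∏ i, if c i = 0 then y else x := by
  have hsub : univ.filter (fun c => c ∈ C ∧ hammingNorm c = w) ⊆ codewords C :=
    fun c hc => mem_filter.2 ⟨mem_univ c, (mem_filter.1 hc).2.1⟩
  calc (weightDist C w : ℝ) * (x ^ w * y ^ (n - w))
      = ∑ c ∈ univ.filter (fun c => c ∈ C ∧ hammingNorm c = w),
          ∏ i, if c i = 0 then y else x := by
        rw [weightDist, ← nsmul_eq_mul, ← sum_const]
        refine sum_congr rfl fun c hc => ?_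
        rw [prod_ite_eq_zero_eq_pow_hammingNorm, Fintype.card_fin, (mem_filter.1 hc).2.2]
    _ ≤ ∑ c ∈ codewords C, ∏ i, if c i = 0 then y else x :=
        sum_le_sum_of_subset_of_nonneg hsub fun c _ _ =>
          prod_nonneg fun i _ => by split_ifs <;> assumption

theorem coe_codewords {n : ℕ} (C : Submodule (ZMod 2) (Fin n → ZMod 2)) :
    (codewords C : Set (Fin n → ZMod 2)) = C := by
  ext c
  simp [codewords]

theorem sum_codewords_prod_sqrt_le_one {n : ℕ} {C : Submodule (ZMod 2) (Fin n → ZMod 2)}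
    (hC : C ≤ dualCode C) {p : ℝ} (hp0 : 0 ≤ p) (hp1 : p ≤ 1) :
    ∑ c ∈ codewords C, ∏ i, (if c i = 0 then √(1 - p) else √p) ≤ 1 := by
  obtain ⟨I, hI, hIc⟩ := exists_injOn_restrict_and_compl hC
  set g : ZMod 2 → ℝ := fun b => if b = 0 then √(1 - p) else √p
  have hg : ∑ b, g b ^ 2 = 1 := by
    rw [show ∑ b, g b ^ 2 = g 0 ^ 2 + g 1 ^ 2 from Fin.sum_univ_two _]
    simp [g, Real.sq_sqrt (sub_nonneg.2 hp1), Real.sq_sqrt hp0]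
  rw [← coe_codewords] at hI hIc
  have hsq := sq_sum_prod_le_pow hI hIc g
  rw [hg, one_pow] at hsq
  exact (pow_le_one_iff_of_nonneg (sum_nonneg fun c _ => prod_nonneg fun i _ => by positivity)
    two_ne_zero).1 hsq

theorem entropy_bound_general (n : ℕ)
    (C : Submodule (ZMod 2) (Fin n → ZMod 2)) (hC : C ≤ dualCode C)
    (w : ℕ) (hw : 0 < w) (hwn : 2 * w < n) :
    (weightDist C w : ℝ) ≤
      (2 : ℝ) ^ ((1 / 2 : ℝ) *
        (-(w / n : ℝ) * Real.logb 2 (w / n) - (1 - w / n) * Real.logb 2 (1 - w / n)) * n) := by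
  have hwn' : w < n := by omega
  have hn : (0 : ℝ) < n := by exact_mod_cast hw.trans hwn'
  have hp0 : (0 : ℝ) < w / n := div_pos (by exact_mod_cast hw) hn
  have hp1 : (w / n : ℝ) < 1 := (div_lt_one hn).2 (by exact_mod_cast hwn')
  have hR : 0 < √(w / n : ℝ) ^ w * √(1 - w / n : ℝ) ^ (n - w) := by
    have := Real.sqrt_pos.2 hp0
    have := Real.sqrt_pos.2 (sub_pos.2 hp1)
    positivity
  rw [two_rpow_half_entropy_mul_eq hw hwn', ← one_div, le_div_iff₀ hR]
  exact (weightDist_mul_le_sum_prod C w (Real.sqrt_nonneg _) (Real.sqrt_nonneg _)).trans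
    (sum_codewords_prod_sqrt_le_one hC hp0.le hp1.le)

theorem entropy_bound (n : ℕ) (hn : Even n)
    (C : Submodule (ZMod 2) (Fin n → ZMod 2)) (hC : C ≤ dualCode C)
    (w : ℕ) (hw : 0 < w) (hwn : 2 * w < n) :
    (weightDist C w : ℝ) ≤
      (2 : ℝ) ^ ((1 / 2 : ℝ) *
        (-(w / n : ℝ) * Real.logb 2 (w / n) - (1 - w / n) * Real.logb 2 (1 - w / n)) * n) :=
  entropy_bound_general n C hC w hw hwn
end

section
/- Let C be a weakly self-dual binary linear code of even length n with weight distribution (A_0, …, A_n). Then for every integer w with 0 < w < n/2, A_w ≤ √e · (n − w + 1)^{w/2}. -/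
/-!
Self-orthogonality makes every pairwise intersection of codeword supports even, so odd weights do
not occur, and the supports of the codewords of weight `w = 2t` form a family of `2t`-sets whose
pairwise intersections lie in `{0, 2, …, 2t - 2}`. By the polynomial method of Frankl and Wilson,
the functions `x ↦ ∏_{l < t} (|A ∩ x| - 2l)`, one for each support `A`, vanish at every other
support but not at `A`, and are multilinear of degree at most `t`; hence
`A_w ≤ ∑_{i ≤ t} (n choose i)`. Since `n` is even, `n ≥ 4t + 2`, and for such `n` comparing the
terms with a geometric series bounds this sum by `√e (n - 2t + 1)^t`.
-/

open scoped Classical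

open Finset Module

section PolynomialMethod

variable {K X : Type*} [Field K] [Finite X]

theorem card_le_finrank_of_eval_diagonal (W : Submodule K (X → K)) (F : Finset X)
    (f : X → X → K) (hfW : ∀ a ∈ F, f a ∈ W) (hdiag : ∀ a ∈ F, f a a ≠ 0)
    (hoff : ∀ a ∈ F, ∀ b ∈ F, a ≠ b → f a b = 0) :
    #F ≤ finrank K W := by
  have hli : LinearIndependent K (fun a : F => f a) := by
    rw [Fintype.linearIndependent_iff]
    intro g hg a
    have hga := congrFun hg a
    simp only [Finset.sum_apply, Pi.smul_apply, smul_eq_mul, Pi.zero_apply] at hga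
    rw [Finset.sum_eq_single a (fun b _ hb => by rw [hoff b b.2 a a.2 (by exact_mod_cast hb),
      mul_zero]) (by simp)] at hga
    exact (mul_eq_zero.mp hga).resolve_right (hdiag a a.2)
  calc #F = Fintype.card F := (Fintype.card_coe F).symm
    _ = finrank K (Submodule.span K (Set.range fun a : F => f a)) := (finrank_span_eq_card hli).symm
    _ ≤ finrank K W := Submodule.finrank_mono
      (Submodule.span_le.mpr (by rintro _ ⟨a, rfl⟩; exact hfW a a.2))

end PolynomialMethod

theorem card_filter_card_le_eq_sum_choose (α : Type*) [Fintype α] (s : ℕ) :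
    #(univ.filter fun S : Finset α => #S ≤ s) =
      ∑ i ∈ range (s + 1), (Fintype.card α).choose i := by
  rw [card_eq_sum_card_fiberwise (f := card) (t := range (s + 1))
    (fun S hS => by simpa [Nat.lt_succ_iff] using hS)]
  refine sum_congr rfl fun i hi => ?_
  rw [filter_filter, ← card_univ, ← card_powersetCard, powersetCard_eq_filter, powerset_univ]
  congr 1
  ext S
  simp only [mem_filter, mem_univ, true_and, mem_range] at hi ⊢
  omega

theorem card_inter_lt_of_ne {α : Type*} [DecidableEq α] {A B : Finset α} (hAB : A ≠ B)
    (h : #A = #B) : #(A ∩ B) < #A := by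
  refine card_lt_card (ssubset_of_subset_of_ne inter_subset_left fun hsub => hAB ?_)
  exact eq_of_subset_of_card_le (inter_eq_left.mp hsub) h.ge

section FranklWilson

variable {α : Type*} [DecidableEq α]

/-- Identifying `B : Finset α` with its indicator vector in `{0,1}^α`, this is the monomial
`∏ i ∈ S, x i`. -/
def subsetIndicator (S : Finset α) : Finset α → ℝ := fun B => if S ⊆ B then 1 else 0

theorem subsetIndicator_mul_card_inter (S A : Finset α) :
    (fun B => (#(A ∩ B) : ℝ) * subsetIndicator S B) = ∑ i ∈ A, subsetIndicator (insert i S) := by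
  ext B
  simp only [Finset.sum_apply, subsetIndicator, insert_subset_iff, ite_and, ← filter_mem_eq_inter,
    card_filter, Nat.cast_sum, sum_mul]
  exact sum_congr rfl fun i _ => by split_ifs <;> simp

variable [Fintype α]

variable (α) in
def multilinearDegreeLE (s : ℕ) : Submodule ℝ (Finset α → ℝ) :=
  Submodule.span ℝ ((univ.filter fun S : Finset α => #S ≤ s).image subsetIndicator)

theorem subsetIndicator_mem_multilinearDegreeLE {S : Finset α} {s : ℕ} (hS : #S ≤ s) :
    subsetIndicator S ∈ multilinearDegreeLE α s :=
  Submodule.subset_span (by simpa using ⟨S, hS, rfl⟩)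

theorem finrank_multilinearDegreeLE_le (s : ℕ) :
    finrank ℝ (multilinearDegreeLE α s) ≤ ∑ i ∈ range (s + 1), (Fintype.card α).choose i :=
  (finrank_span_finset_le_card _).trans
    (card_image_le.trans (card_filter_card_le_eq_sum_choose α s).le)

theorem mul_card_inter_sub_mem_multilinearDegreeLE (A : Finset α) (l : ℝ) {s : ℕ}
    {g : Finset α → ℝ} (hg : g ∈ multilinearDegreeLE α s) :
    (fun B => ((#(A ∩ B) : ℝ) - l) * g B) ∈ multilinearDegreeLE α (s + 1) := by
  let h : Finset α → ℝ := fun B => (#(A ∩ B) : ℝ) - l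
  suffices multilinearDegreeLE α s ≤
      (multilinearDegreeLE α (s + 1)).comap (LinearMap.mulLeft ℝ h) from this hg
  refine Submodule.span_le.mpr ?_
  intro f hf
  obtain ⟨S, hS, rfl⟩ : ∃ S : Finset α, #S ≤ s ∧ subsetIndicator S = f := by simpa using hf
  have : h * subsetIndicator S = ∑ i ∈ A, subsetIndicator (insert i S) - l • subsetIndicator S := by
    rw [← subsetIndicator_mul_card_inter]
    ext B
    simp only [h, Pi.mul_apply, Pi.sub_apply, Pi.smul_apply, smul_eq_mul]
    ring
  rw [SetLike.mem_coe, Submodule.mem_comap, LinearMap.mulLeft_apply, this]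
  exact sub_mem (sum_mem fun i _ => subsetIndicator_mem_multilinearDegreeLE
    ((card_insert_le i S).trans (by omega)))
    (Submodule.smul_mem _ _ (subsetIndicator_mem_multilinearDegreeLE (by omega)))

theorem prod_card_inter_sub_mem_multilinearDegreeLE (A : Finset α) (L : Finset ℕ) :
    (fun B => ∏ l ∈ L, ((#(A ∩ B) : ℝ) - l)) ∈ multilinearDegreeLE α #L := by
  induction L using Finset.induction_on with
  | empty =>
    have : (fun B => ∏ l ∈ (∅ : Finset ℕ), ((#(A ∩ B) : ℝ) - l)) = subsetIndicator ∅ := by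
      funext B
      simp [subsetIndicator]
    rw [this]
    exact subsetIndicator_mem_multilinearDegreeLE (by simp)
  | insert l L hl ih =>
    simp only [prod_insert hl, card_insert_of_notMem hl]
    exact mul_card_inter_sub_mem_multilinearDegreeLE A l ih

theorem card_le_sum_choose_of_card_inter_mem (F : Finset (Finset α)) (L : Finset ℕ)
    (hF : ∀ A ∈ F, #A ∉ L) (hFL : ∀ A ∈ F, ∀ B ∈ F, A ≠ B → #(A ∩ B) ∈ L) :
    #F ≤ ∑ i ∈ range (#L + 1), (Fintype.card α).choose i := by
  refine (card_le_finrank_of_eval_diagonal _ F (fun A B => ∏ l ∈ L, ((#(A ∩ B) : ℝ) - l))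
    (fun A _ => prod_card_inter_sub_mem_multilinearDegreeLE A L) ?_
    (fun A hA B hB hAB => prod_eq_zero (hFL A hA B hB hAB) (sub_self _))).trans
    (finrank_multilinearDegreeLE_le _)
  intro A hA
  rw [inter_self]
  refine prod_ne_zero_iff.mpr fun l hl h => hF A hA ?_
  rw [sub_eq_zero, Nat.cast_inj] at h
  exact h ▸ hl

end FranklWilson

section BinaryVectors

variable {ι : Type*} [Fintype ι]

def binarySupport (c : ι → ZMod 2) : Finset ι := univ.filter (c · ≠ 0)

theorem card_binarySupport (c : ι → ZMod 2) : #(binarySupport c) = hammingNorm c := rfl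

theorem binarySupport_injective : Function.Injective (binarySupport : (ι → ZMod 2) → Finset ι) := by
  intro c c' h
  funext i
  have key : ∀ a b : ZMod 2, (a ≠ 0 ↔ b ≠ 0) → a = b := by decide
  exact key _ _ (by simpa [binarySupport] using congrArg (i ∈ ·) h)

theorem sum_mul_eq_card_inter_binarySupport [DecidableEq ι] (c c' : ι → ZMod 2) :
    ∑ i, c i * c' i = #(binarySupport c ∩ binarySupport c') := by
  have hmul : ∀ a b : ZMod 2, a * b = if a ≠ 0 ∧ b ≠ 0 then 1 else 0 := by decide
  simp only [hmul, sum_boole, binarySupport, filter_and]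

end BinaryVectors

section SelfOrthogonalCode

variable {n : ℕ} {C : Submodule (ZMod 2) (Fin n → ZMod 2)}

theorem even_card_inter_binarySupport (hC : C ≤ dualCode C) {c c' : Fin n → ZMod 2}
    (hc : c ∈ C) (hc' : c' ∈ C) : Even #(binarySupport c ∩ binarySupport c') := by
  rw [← ZMod.natCast_eq_zero_iff_even, ← sum_mul_eq_card_inter_binarySupport]
  exact hC hc c' hc'

theorem weightDist_eq_zero_of_odd (hC : C ≤ dualCode C) {w : ℕ} (hw : Odd w) :
    weightDist C w = 0 := by
  refine card_eq_zero.mpr (filter_eq_empty_iff.mpr fun c _ ⟨hc, hcw⟩ => ?_)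
  have := even_card_inter_binarySupport hC hc hc
  rw [inter_self, card_binarySupport, hcw] at this
  exact Nat.not_even_iff_odd.mpr hw this

theorem weightDist_two_mul_le (hC : C ≤ dualCode C) (t : ℕ) :
    weightDist C (2 * t) ≤ ∑ i ∈ range (t + 1), n.choose i := by
  set F := univ.filter fun c : Fin n → ZMod 2 => c ∈ C ∧ hammingNorm c = 2 * t
  set L := (range t).image (2 * ·)
  have hL : #L = t := by
    rw [card_image_of_injective _ (mul_right_injective₀ two_ne_zero), card_range]
  have hF : ∀ A ∈ F.image binarySupport, ∃ c ∈ C, binarySupport c = A ∧ #A = 2 * t := by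
    simp only [F, mem_image, mem_filter, mem_univ, true_and]
    rintro _ ⟨c, ⟨hc, hcw⟩, rfl⟩
    exact ⟨c, hc, rfl, hcw⟩
  calc weightDist C (2 * t) = #(F.image binarySupport) :=
        (card_image_of_injective _ binarySupport_injective).symm
    _ ≤ ∑ i ∈ range (#L + 1), (Fintype.card (Fin n)).choose i := by
      refine card_le_sum_choose_of_card_inter_mem _ L (fun A hA => ?_) (fun A hA B hB hAB => ?_)
      · obtain ⟨-, -, -, hA⟩ := hF A hA
        simp only [L, mem_image, mem_range]
        omega
      · obtain ⟨c, hc, rfl, hA⟩ := hF A hA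
        obtain ⟨c', hc', rfl, hB⟩ := hF B hB
        obtain ⟨k, hk⟩ := even_card_inter_binarySupport hC hc hc'
        have := card_inter_lt_of_ne hAB (hA.trans hB.symm)
        exact mem_image.mpr ⟨k, mem_range.mpr (by omega), by omega⟩
    _ = ∑ i ∈ range (t + 1), n.choose i := by rw [hL, Fintype.card_fin]

end SelfOrthogonalCode

section BinomialSum

open Nat Real

theorem factorial_mul_choose_mul_four_pow_le {n t i : ℕ} (hi : i ≤ t) (ht : 4 * t ≤ n) :
    t ! * n.choose i * 4 ^ (t - i) ≤ n ^ t := by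
  have hfac : i ! * t.descFactorial (t - i) = t ! := by
    simpa [Nat.sub_sub_self hi] using factorial_mul_descFactorial (Nat.sub_le t i)
  calc t ! * n.choose i * 4 ^ (t - i)
      = (i ! * n.choose i) * (t.descFactorial (t - i) * 4 ^ (t - i)) := by rw [← hfac]; ring
    _ ≤ n ^ i * (t ^ (t - i) * 4 ^ (t - i)) := by
      rw [← descFactorial_eq_factorial_mul_choose]
      gcongr
      · exact descFactorial_le_pow n i
      · exact descFactorial_le_pow t (t - i)
    _ = n ^ i * (4 * t) ^ (t - i) := by rw [mul_pow, mul_comm (4 ^ _)]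
    _ ≤ n ^ i * n ^ (t - i) := by gcongr
    _ = n ^ t := by rw [← pow_add, Nat.add_sub_cancel' hi]

theorem factorial_mul_sum_choose_le {n t : ℕ} (ht : 4 * t ≤ n) :
    (t ! : ℝ) * ∑ i ∈ range (t + 1), (n.choose i : ℝ) ≤ 4 / 3 * n ^ t := by
  have hterm : ∀ i ∈ range (t + 1), (t ! : ℝ) * n.choose i ≤ n ^ t * (1 / 4) ^ (t - i) := by
    intro i hi
    rw [one_div_pow, mul_one_div, le_div_iff₀ (by positivity)]
    exact_mod_cast factorial_mul_choose_mul_four_pow_le (mem_range_succ_iff.mp hi) ht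
  have hgeom : ∑ i ∈ range (t + 1), (1 / 4 : ℝ) ^ (t - i) ≤ 4 / 3 := by
    rw [← sum_range_reflect]
    calc ∑ j ∈ range (t + 1), (1 / 4 : ℝ) ^ (t - (t + 1 - 1 - j))
        = ∑ j ∈ Ico 0 (t + 1), (1 / 4 : ℝ) ^ j :=
          sum_congr (range_eq_Ico (t + 1)) fun j hj => by rw [mem_Ico] at hj; congr 1; omega
      _ ≤ (1 / 4) ^ 0 / (1 - 1 / 4) := geom_sum_Ico_le_of_lt_one (by norm_num) (by norm_num)
      _ = 4 / 3 := by norm_num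
  calc (t ! : ℝ) * ∑ i ∈ range (t + 1), (n.choose i : ℝ)
      ≤ ∑ i ∈ range (t + 1), (n : ℝ) ^ t * (1 / 4) ^ (t - i) := by
        rw [mul_sum]; exact sum_le_sum hterm
    _ = n ^ t * ∑ i ∈ range (t + 1), (1 / 4 : ℝ) ^ (t - i) := by rw [mul_sum]
    _ ≤ 4 / 3 * n ^ t := by rw [mul_comm]; gcongr

theorem eight_fifths_le_sqrt_exp_one : (8 / 5 : ℝ) ≤ √(exp 1) :=
  le_sqrt_of_sq_le (by nlinarith [exp_one_gt_d9])

theorem four_thirds_mul_pow_le_sqrt_exp_mul (t : ℕ) :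
    4 / 3 * (4 * t + 2 : ℝ) ^ t ≤ √(exp 1) * t ! * (2 * t + 3) ^ t := by
  have he := eight_fifths_le_sqrt_exp_one
  obtain ht | ht : t ≤ 3 ∨ 4 ≤ t := by omega
  · interval_cases t <;> norm_num [Nat.factorial] <;> nlinarith
  obtain ⟨s, rfl⟩ : ∃ s, t = s + 4 := ⟨t - 4, by omega⟩
  have hfac : 4 / 3 * (2 : ℝ) ^ (s + 4) ≤ (s + 4)! := by
    have : 4 ! * 5 ^ s ≤ (4 + s)! := factorial_mul_pow_le_factorial
    rw [add_comm 4 s] at this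
    calc 4 / 3 * (2 : ℝ) ^ (s + 4) = 64 / 3 * 2 ^ s := by ring
      _ ≤ 24 * 5 ^ s := by gcongr <;> norm_num
      _ ≤ (s + 4)! := by exact_mod_cast this
  calc 4 / 3 * (4 * ((s + 4 : ℕ) : ℝ) + 2) ^ (s + 4)
      ≤ 4 / 3 * (2 * (2 * ((s + 4 : ℕ) : ℝ) + 3)) ^ (s + 4) := by gcongr; linarith
    _ = (4 / 3 * 2 ^ (s + 4)) * (2 * ((s + 4 : ℕ) : ℝ) + 3) ^ (s + 4) := by rw [mul_pow]; ring
    _ ≤ 1 * (s + 4)! * (2 * ((s + 4 : ℕ) : ℝ) + 3) ^ (s + 4) := by rw [one_mul]; gcongr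
    _ ≤ √(exp 1) * (s + 4)! * (2 * ((s + 4 : ℕ) : ℝ) + 3) ^ (s + 4) := by
      gcongr; linarith

theorem sum_choose_le_sqrt_exp_mul_pow {n t : ℕ} (h : 4 * t + 2 ≤ n) :
    ∑ i ∈ range (t + 1), (n.choose i : ℝ) ≤ √(exp 1) * (n - 2 * t + 1) ^ t := by
  rcases Nat.eq_zero_or_pos t with rfl | ht
  · simp only [zero_add, range_one, sum_singleton, choose_zero_right, cast_one, pow_zero, mul_one]
    linarith [eight_fifths_le_sqrt_exp_one]
  have hS := factorial_mul_sum_choose_le (show 4 * t ≤ n by omega)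
  have hnR : (4 * t + 2 : ℝ) ≤ n := by exact_mod_cast h
  have htR : (1 : ℝ) ≤ t := by exact_mod_cast ht
  set m : ℝ := n - 2 * t + 1
  -- `n / m` is largest at the least admissible `n = 4t + 2`.
  have hratio : (n : ℝ) * (2 * t + 3) ≤ (4 * t + 2) * m := by nlinarith
  refine le_of_mul_le_mul_left ?_ (by positivity : (0 : ℝ) < t ! * (2 * t + 3) ^ t)
  calc (t ! * (2 * t + 3) ^ t : ℝ) * ∑ i ∈ range (t + 1), (n.choose i : ℝ)
      = (2 * t + 3) ^ t * (t ! * ∑ i ∈ range (t + 1), (n.choose i : ℝ)) := by ring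
    _ ≤ (2 * t + 3) ^ t * (4 / 3 * n ^ t) := by gcongr
    _ = 4 / 3 * (n * (2 * t + 3)) ^ t := by rw [mul_pow]; ring
    _ ≤ 4 / 3 * ((4 * t + 2) * m) ^ t := by gcongr
    _ = 4 / 3 * (4 * t + 2) ^ t * m ^ t := by rw [mul_pow]; ring
    _ ≤ √(exp 1) * t ! * (2 * t + 3) ^ t * m ^ t :=
      mul_le_mul_of_nonneg_right (four_thirds_mul_pow_le_sqrt_exp_mul t)
        (pow_nonneg (by linarith) t)
    _ = (t ! * (2 * t + 3) ^ t) * (√(exp 1) * m ^ t) := by ring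

end BinomialSum

theorem sqrt_e_bound_general (n : ℕ) (hn : Even n)
    (C : Submodule (ZMod 2) (Fin n → ZMod 2)) (hC : C ≤ dualCode C)
    (w : ℕ) (hwn : 2 * w < n) :
    (weightDist C w : ℝ) ≤
      Real.sqrt (Real.exp 1) * ((n : ℝ) - w + 1) ^ ((w : ℝ) / 2) := by
  obtain ⟨t, rfl | rfl⟩ := Nat.even_or_odd' w
  · have h : 4 * t + 2 ≤ n := by obtain ⟨r, rfl⟩ := hn; omega
    have hexp : ((2 * t : ℕ) : ℝ) / 2 = t := by push_cast; ring
    rw [hexp, Real.rpow_natCast]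
    calc (weightDist C (2 * t) : ℝ) ≤ ∑ i ∈ range (t + 1), (n.choose i : ℝ) := by
          exact_mod_cast weightDist_two_mul_le hC t
      _ ≤ √(Real.exp 1) * (n - 2 * t + 1) ^ t := sum_choose_le_sqrt_exp_mul_pow h
      _ = _ := by push_cast; ring
  · rw [weightDist_eq_zero_of_odd hC (odd_two_mul_add_one t), Nat.cast_zero]
    have hbase : (0 : ℝ) ≤ n - (2 * t + 1 : ℕ) + 1 := by
      have : ((2 * t + 1 : ℕ) : ℝ) ≤ n := by exact_mod_cast (by omega : 2 * t + 1 ≤ n)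
      linarith
    exact mul_nonneg (Real.sqrt_nonneg _) (Real.rpow_nonneg hbase _)

theorem sqrt_e_bound (n : ℕ) (hn : Even n)
    (C : Submodule (ZMod 2) (Fin n → ZMod 2)) (hC : C ≤ dualCode C)
    (w : ℕ) (hw : 0 < w) (hwn : 2 * w < n) :
    (weightDist C w : ℝ) ≤
      Real.sqrt (Real.exp 1) * ((n : ℝ) - w + 1) ^ ((w : ℝ) / 2) :=
  sqrt_e_bound_general n hn C hC w hwn
end
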